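/- arXiv:2209.12239 — 5 statements merged into one kernel-verified Lean document; each statement's English description precedes it below -/
import Mathlib

section
/- For all integers a, b ≥ 2 with a + b > 8, we have p(a) * p(b) ≥ p(a + b). -/
/-- `p n` is the number of partitions of `n`. -/
def p (n : ℕ) : ℕ := Fintype.card (Nat.Partition n)

/-!
Let `pGe K n` count the partitions of `n` into parts `≥ K`, so that `p = pGe 1`. Removing a part
equal to `K` gives `pGe K (n + K) = pGe K n + pGe (K + 1) (n + K)`; applied to both sides, this
recurrence reduces `pGe K (a + b) ≤ pGe K a * p b` (for `K ≥ 2`, `b ≥ 6`) to the window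
`K ≤ a < 2 K`, where `pGe K a = 1`. There, for `K ≥ 3`, an injection proves `pGe K (a + b) ≤ p b`:
subtracting `K - 1` from each of `m ≥ 3` parts and adding `(K - 1) m - a` ones leaves a partition
of `b` with `K m - a ≥ K + 1` parts, the partitions with two parts go to partitions of `b` with at
most two parts, and `1 + 1 + (b - 2)` is left over for the partition with one part. For `K = 2`
the same construction gives `pGe 2 (b + 1) + pGe 2 (b + 2) ≤ p b`, i.e. `p (b + 2) ≤ 2 p b`,
which together with `pGe 3 (n + 1) ≤ pGe 2 n` settles `a = 2, 3`. Since
`p (n + 1) = p n + pGe 2 (n + 1)`, induction on `a` proves the theorem for `b ≥ 6`; the cases with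
`a, b ≤ 5` are computed from the recurrence.
-/

open Multiset
open scoped Finset

namespace Nat.Partition

variable {n : ℕ}

lemma parts_ne_zero (μ : n.Partition) (hn : n ≠ 0) : μ.parts ≠ 0 :=
  fun h => hn (by rw [← μ.parts_sum, h, Multiset.sum_zero])

lemma parts_eq_singleton (μ : n.Partition) (h : card μ.parts = 1) : μ.parts = {n} := by
  obtain ⟨x, hx⟩ := Multiset.card_eq_one.1 h
  have := μ.parts_sum
  simp_all

lemma mem_restricted {P : ℕ → Prop} [DecidablePred P] {μ : n.Partition} :
    μ ∈ restricted n P ↔ ∀ i ∈ μ.parts, P i := by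
  simp [restricted]

end Nat.Partition

lemma card_lt_p_of_injOn {α : Type*} {S : Finset α} {f : α → Multiset ℕ} {b : ℕ}
    (hf : Set.InjOn f S) (hS : ∀ x ∈ S, ∃ ν : b.Partition, ν.parts = f x)
    (ν₀ : b.Partition) (hν₀ : ∀ x ∈ S, f x ≠ ν₀.parts) : #S < p b := by
  set T := (Finset.univ : Finset b.Partition).image Nat.Partition.parts
  have hT : #T = p b := Finset.card_image_of_injective _ fun _ _ => Nat.Partition.ext
  have hmaps : Set.MapsTo f S (T.erase ν₀.parts) := fun x hx => by
    obtain ⟨ν, hν⟩ := hS x hx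
    exact Finset.mem_erase.2 ⟨hν₀ x hx, Finset.mem_image.2 ⟨ν, Finset.mem_univ _, hν⟩⟩
  calc #S ≤ #(T.erase ν₀.parts) := Finset.card_le_card_of_injOn f hmaps hf
    _ < #T := Finset.card_erase_lt_of_mem (Finset.mem_image_of_mem _ (Finset.mem_univ ν₀))
    _ = p b := hT

def pGe (K n : ℕ) : ℕ := #(Nat.Partition.restricted n (K ≤ ·))

lemma pGe_le_p (K n : ℕ) : pGe K n ≤ p n := Finset.card_le_univ _

lemma pGe_one (n : ℕ) : pGe 1 n = p n := by
  rw [pGe, p, ← Finset.card_univ]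
  congr 1
  exact Finset.filter_true_of_mem fun μ _ i hi => μ.parts_pos hi

lemma pGe_le_pGe_of_le {K K' : ℕ} (n : ℕ) (h : K ≤ K') : pGe K' n ≤ pGe K n :=
  Finset.card_le_card fun _ hμ => Nat.Partition.mem_restricted.2 fun i hi =>
    h.trans (Nat.Partition.mem_restricted.1 hμ i hi)

lemma pGe_zero_right (K : ℕ) : pGe K 0 = 1 := by
  rw [pGe, Finset.card_eq_one]
  exact ⟨default, Finset.eq_singleton_iff_unique_mem.2
    ⟨by simp [Nat.Partition.restricted], fun _ _ => Subsingleton.elim _ _⟩⟩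

lemma pGe_eq_zero {K n : ℕ} (hn : 0 < n) (h : n < K) : pGe K n = 0 := by
  rw [pGe, Finset.card_eq_zero, Finset.eq_empty_iff_forall_notMem]
  intro μ hμ
  obtain ⟨i, hi⟩ := Multiset.exists_mem_of_ne_zero (μ.parts_ne_zero hn.ne')
  have := Nat.Partition.mem_restricted.1 hμ i hi
  have := μ.le_of_mem_parts hi
  omega

lemma one_le_pGe {K n : ℕ} (hn : 0 < n) (h : K ≤ n) : 1 ≤ pGe K n :=
  Finset.card_pos.2 ⟨Nat.Partition.indiscrete n, by
    simp [Nat.Partition.restricted, Nat.Partition.indiscrete_parts hn.ne', h]⟩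

lemma pGe_le_card_filter_add_one (K n : ℕ) :
    pGe K n ≤ #{μ ∈ Nat.Partition.restricted n (K ≤ ·) | card μ.parts ≠ 1} + 1 := by
  rw [pGe, ← Finset.card_filter_add_card_filter_not (fun μ : n.Partition => card μ.parts ≠ 1)]
  refine Nat.add_le_add_left (Finset.card_le_one.2 fun μ hμ ν hν => Nat.Partition.ext ?_) _
  simp only [Finset.mem_filter, not_not] at hμ hν
  rw [μ.parts_eq_singleton hμ.2, ν.parts_eq_singleton hν.2]

lemma pGe_add_self {K : ℕ} (n : ℕ) (hK : 1 ≤ K) :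
    pGe K (n + K) = pGe K n + pGe (K + 1) (n + K) := by
  rw [pGe, ← Finset.card_filter_add_card_filter_not (fun μ : (n + K).Partition => K ∈ μ.parts)]
  congr 1
  · symm
    refine Finset.card_bij' (fun μ _ => ⟨K ::ₘ μ.parts, ?_, ?_⟩)
      (fun μ hμ => ⟨μ.parts.erase K, ?_, ?_⟩) ?_ ?_ ?_ ?_
    · intro i hi
      rcases Multiset.mem_cons.1 hi with rfl | hi
      · exact hK
      · exact μ.parts_pos hi
    · simp [μ.parts_sum, add_comm]
    · exact fun hi => μ.parts_pos (Multiset.mem_of_mem_erase hi)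
    · have hsum := congrArg Multiset.sum (Multiset.cons_erase (Finset.mem_filter.1 hμ).2)
      rw [Multiset.sum_cons, μ.parts_sum] at hsum
      omega
    · intro μ hμ
      simp only [Finset.mem_filter, Nat.Partition.mem_restricted, Multiset.mem_cons_self,
        and_true, Multiset.mem_cons, forall_eq_or_imp, le_refl, true_and]
      exact Nat.Partition.mem_restricted.1 hμ
    · intro μ hμ
      exact Nat.Partition.mem_restricted.2 fun i hi =>
        Nat.Partition.mem_restricted.1 (Finset.mem_filter.1 hμ).1 i (Multiset.mem_of_mem_erase hi)
    · exact fun μ _ => Nat.Partition.ext (Multiset.erase_cons_head K μ.parts)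
    · exact fun μ hμ => Nat.Partition.ext (Multiset.cons_erase (Finset.mem_filter.1 hμ).2)
  · congr 1
    ext μ
    simp only [Nat.Partition.restricted, Finset.mem_filter, Finset.mem_univ, true_and]
    constructor
    · rintro ⟨h, hK⟩ i hi
      exact lt_of_le_of_ne (h i hi) (by rintro rfl; exact hK hi)
    · exact fun h => ⟨fun i hi => Nat.le_of_succ_le (h i hi), fun hK => lt_irrefl K (h K hK)⟩

lemma pGe_eq_pGe_sub_add_pGe_succ {K n : ℕ} (hK : 1 ≤ K) (h : K ≤ n) :
    pGe K n = pGe K (n - K) + pGe (K + 1) n := by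
  obtain ⟨m, rfl⟩ := Nat.exists_eq_add_of_le' h
  rw [pGe_add_self m hK, Nat.add_sub_cancel]

lemma pGe_succ_succ_le {K n : ℕ} (hK : 1 ≤ K) : pGe (K + 1) (n + 1) ≤ pGe K n := by
  rcases lt_or_ge n K with h | h
  · rw [pGe_eq_zero n.succ_pos (by omega)]
    exact Nat.zero_le _
  · have h₁ := pGe_le_pGe_of_le (n - K) (by omega : K ≤ K + 1)
    have h₂ := pGe_succ_succ_le (K := K + 1) (n := n) (by omega)
    rw [pGe_eq_pGe_sub_add_pGe_succ (by omega) (by omega : K + 1 ≤ n + 1),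
      pGe_eq_pGe_sub_add_pGe_succ hK h, show n + 1 - (K + 1) = n - K by omega]
    omega
termination_by n + 1 - K

lemma p_succ (n : ℕ) : p (n + 1) = p n + pGe 2 (n + 1) := by
  rw [← pGe_one, ← pGe_one, pGe_add_self n le_rfl]

def shrinkParts (d r : ℕ) (s : Multiset ℕ) : Multiset ℕ :=
  s.map (· - d) + replicate (d * card s - r) 1

section shrinkParts

variable {d r : ℕ} {s t : Multiset ℕ}

lemma Multiset.eq_of_map_tsub_eq (hs : ∀ x ∈ s, d ≤ x) (ht : ∀ x ∈ t, d ≤ x)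
    (h : s.map (· - d) = t.map (· - d)) : s = t := by
  have key : ∀ u : Multiset ℕ, (∀ x ∈ u, d ≤ x) → (u.map (· - d)).map (· + d) = u := by
    intro u hu
    rw [Multiset.map_map]
    conv_rhs => rw [← Multiset.map_id u]
    exact Multiset.map_congr rfl fun x hx => Nat.sub_add_cancel (hu x hx)
  rw [← key s hs, ← key t ht, h]

lemma card_shrinkParts (hr : r ≤ d * card s) :
    card (shrinkParts d r s) + r = (d + 1) * card s := by
  simp only [shrinkParts, card_add, card_map, card_replicate]
  rw [add_mul, one_mul]
  omega

lemma sum_shrinkParts (hs : ∀ x ∈ s, d ≤ x) (hr : r ≤ d * card s) :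
    (shrinkParts d r s).sum + r = s.sum := by
  have h : (s.map (· - d)).sum = s.sum - card s • d := by
    simpa using Multiset.sum_map_tsub s (f := id) (g := fun _ => d) hs
  have hle := Multiset.card_nsmul_le_sum hs
  rw [smul_eq_mul, mul_comm] at h hle
  simp only [shrinkParts, sum_add, sum_replicate, smul_eq_mul, mul_one, h]
  omega

lemma pos_of_mem_shrinkParts (hs : ∀ x ∈ s, d < x) {i : ℕ} (hi : i ∈ shrinkParts d r s) :
    0 < i := by
  rcases Multiset.mem_add.1 hi with hi | hi
  · obtain ⟨x, hx, rfl⟩ := Multiset.mem_map.1 hi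
    exact Nat.sub_pos_of_lt (hs x hx)
  · rw [Multiset.eq_of_mem_replicate hi]
    exact one_pos

lemma one_mem_shrinkParts (hr : r < d * card s) : 1 ∈ shrinkParts d r s :=
  Multiset.mem_add.2 <| Or.inr <| Multiset.mem_replicate.2 ⟨by omega, rfl⟩

lemma Nat.Partition.exists_parts_eq_shrinkParts {b : ℕ} (hs : ∀ x ∈ s, d < x)
    (hsum : s.sum = b + r) (hr : r ≤ d * card s) :
    ∃ ν : b.Partition, ν.parts = shrinkParts d r s := by
  have := sum_shrinkParts (fun x hx => (hs x hx).le) hr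
  exact ⟨⟨_, pos_of_mem_shrinkParts hs, by omega⟩, rfl⟩

lemma shrinkParts_inj (hs : ∀ x ∈ s, d ≤ x) (ht : ∀ x ∈ t, d ≤ x) (hrs : r ≤ d * card s)
    (hrt : r ≤ d * card t) (h : shrinkParts d r s = shrinkParts d r t) : s = t := by
  have hcard : card s = card t := by
    have hs' := card_shrinkParts hrs
    have ht' := card_shrinkParts hrt
    rw [h] at hs'
    exact Nat.eq_of_mul_eq_mul_left (Nat.succ_pos d)
      (show (d + 1) * card s = (d + 1) * card t by omega)
  rw [shrinkParts, shrinkParts, hcard] at h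
  exact Multiset.eq_of_map_tsub_eq hs ht (add_right_cancel h)

lemma shrinkParts_one_inj {r' : ℕ} (hs : ∀ x ∈ s, 1 ≤ x) (ht : ∀ x ∈ t, 1 ≤ x)
    (hr : r = 1 ∨ r = 2) (hr' : r' = 1 ∨ r' = 2) (hrs : r ≤ card s) (hrt : r' ≤ card t)
    (h : shrinkParts 1 r s = shrinkParts 1 r' t) : r = r' ∧ s = t := by
  -- an image has `2 card s - r` parts, so its parity recovers `r`
  have hs' := card_shrinkParts (d := 1) (by rwa [one_mul] : r ≤ 1 * card s)
  have ht' := card_shrinkParts (d := 1) (by rwa [one_mul] : r' ≤ 1 * card t)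
  rw [h] at hs'
  obtain rfl : r = r' := by omega
  exact ⟨rfl, shrinkParts_inj hs ht (by rwa [one_mul]) (by rwa [one_mul]) h⟩

lemma shrinkParts_one_ne {ν : Multiset ℕ} (hν : card ν = 3) (hν₁ : 1 ∉ ν) (hr : r = 1 ∨ r = 2)
    (hrs : r ≤ card s) : shrinkParts 1 r s ≠ ν := by
  rintro rfl
  have hcard := card_shrinkParts (d := 1) (by rwa [one_mul] : r ≤ 1 * card s)
  exact hν₁ (one_mem_shrinkParts (by omega))

end shrinkParts

lemma pGe_two_add_one_add_card_lt {b : ℕ} (hb : 6 ≤ b) :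
    pGe 2 (b + 1) + #{μ ∈ Nat.Partition.restricted (b + 2) (2 ≤ ·) | card μ.parts ≠ 1} < p b := by
  set D := (Nat.Partition.restricted (b + 1) (2 ≤ ·)).disjSum
    {μ ∈ Nat.Partition.restricted (b + 2) (2 ≤ ·) | card μ.parts ≠ 1}
  set r := Sum.elim (fun _ : (b + 1).Partition => 1) (fun _ : (b + 2).Partition => 2)
  set P := Sum.elim (fun μ : (b + 1).Partition => μ.parts) (fun μ : (b + 2).Partition => μ.parts)
  have hD : ∀ z ∈ D, (∀ x ∈ P z, 1 < x) ∧ (P z).sum = b + r z ∧ r z ≤ card (P z) ∧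
      (r z = 1 ∨ r z = 2) := by
    rintro (μ | μ) hz <;>
      simp only [D, Finset.inl_mem_disjSum, Finset.inr_mem_disjSum, Finset.mem_filter] at hz <;>
      have := Multiset.card_pos.2 (μ.parts_ne_zero (by omega))
    · exact ⟨Nat.Partition.mem_restricted.1 hz, μ.parts_sum, this, Or.inl rfl⟩
    · exact ⟨Nat.Partition.mem_restricted.1 hz.1, μ.parts_sum,
        by simp only [Sum.elim_inr, r, P]; omega, Or.inr rfl⟩
  have h₁ : 1 ∉ ({2, 2, b - 4} : Multiset ℕ) := by
    simp only [insert_eq_cons, mem_cons, mem_singleton]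
    omega
  rw [pGe, ← Finset.card_disjSum]
  refine card_lt_p_of_injOn (f := fun z => shrinkParts 1 (r z) (P z)) ?_ (fun z hz => ?_)
    ⟨{2, 2, b - 4}, fun hi => by simp only [insert_eq_cons, mem_cons, mem_singleton] at hi; omega,
      by simp only [insert_eq_cons, sum_cons, sum_singleton]; omega⟩
    (fun z hz => shrinkParts_one_ne rfl h₁ (hD z hz).2.2.2 (hD z hz).2.2.1)
  · intro z hz z' hz' h
    obtain ⟨hgt, -, hle, hr⟩ := hD z hz
    obtain ⟨hgt', -, hle', hr'⟩ := hD z' hz'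
    obtain ⟨hrr, hP⟩ := shrinkParts_one_inj (fun x hx => (hgt x hx).le)
      (fun x hx => (hgt' x hx).le) hr hr' hle hle' h
    rcases z with μ | μ <;> rcases z' with μ' | μ' <;>
      simp only [r, P, Sum.elim_inl, Sum.elim_inr, Sum.inl.injEq, Sum.inr.injEq,
        OfNat.one_ne_ofNat, OfNat.ofNat_ne_one] at hrr hP ⊢ <;>
      exact Nat.Partition.ext hP
  · obtain ⟨hgt, hsum, hle, -⟩ := hD z hz
    exact Nat.Partition.exists_parts_eq_shrinkParts hgt hsum (by rwa [one_mul])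

lemma pGe_two_add_one_add_pGe_two_add_two_le {b : ℕ} (hb : 6 ≤ b) :
    pGe 2 (b + 1) + pGe 2 (b + 2) ≤ p b := by
  have := pGe_le_card_filter_add_one 2 (b + 2)
  have := pGe_two_add_one_add_card_lt hb
  omega

def twoParts (b u : ℕ) : Multiset ℕ := if u = b then {b} else {u, b - u}

section twoParts

variable {b u : ℕ}

lemma card_twoParts_le : card (twoParts b u) ≤ 2 := by
  unfold twoParts
  split_ifs <;> simp

lemma sup_twoParts (hb : b < 2 * u) : (twoParts b u).sup = u := by
  unfold twoParts
  split_ifs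
  · simp only [sup_singleton, *]
  · simp only [insert_eq_cons, sup_cons, sup_singleton]
    omega

lemma Nat.Partition.exists_parts_eq_twoParts (hu : u ≤ b) (hb : b < 2 * u) :
    ∃ ν : b.Partition, ν.parts = twoParts b u := by
  refine ⟨⟨twoParts b u, fun {i} hi => ?_, ?_⟩, rfl⟩ <;> unfold twoParts at *
  · split_ifs at hi <;> simp only [insert_eq_cons, mem_cons, mem_singleton] at hi <;> omega
  · split_ifs <;> simp only [insert_eq_cons, sum_cons, sum_singleton]
    omega

end twoParts

lemma Multiset.eq_pair_sup_of_card_eq_two {s : Multiset ℕ} (h : card s = 2) :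
    s = {s.sup, s.sum - s.sup} ∧ s.sum ≤ 2 * s.sup := by
  obtain ⟨x, y, rfl⟩ := Multiset.card_eq_two.1 h
  rcases le_total x y with hxy | hxy
  · simp only [Multiset.pair_comm x y, insert_eq_cons, sup_cons, sup_singleton, max_eq_left hxy,
      sum_cons, sum_singleton, add_tsub_cancel_left, true_and]
    omega
  · simp only [insert_eq_cons, sup_cons, sup_singleton, max_eq_left hxy, sum_cons, sum_singleton,
      add_tsub_cancel_left, true_and]
    omega

-- sends `{x, y}` with `y ≤ x` to `{x + K - a, y - K}`, dropping a zero part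
def windowMap (K a b : ℕ) (s : Multiset ℕ) : Multiset ℕ :=
  if card s = 2 then twoParts b (s.sup + K - a) else shrinkParts (K - 1) a s

section windowMap

variable {K a b : ℕ} {μ μ' : (a + b).Partition}

lemma Nat.Partition.sup_add_sub_bounds (ha : a < 2 * K) (hμ : ∀ x ∈ μ.parts, K ≤ x)
    (h2 : card μ.parts = 2) : μ.parts.sup + K - a ≤ b ∧ b < 2 * (μ.parts.sup + K - a) := by
  obtain ⟨hs, hle⟩ := Multiset.eq_pair_sup_of_card_eq_two h2
  set x := μ.parts.sup
  have hx : K ≤ x := hμ _ (by rw [hs]; simp)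
  have hy : K ≤ μ.parts.sum - x := hμ _ (by rw [hs]; simp)
  rw [μ.parts_sum] at hle hy
  omega

lemma windowMap_cases {s : Multiset ℕ} (hK : 3 ≤ K) (ha : a < 2 * K) (hs : 2 ≤ card s) :
    (card s = 2 ∧ windowMap K a b s = twoParts b (s.sup + K - a)) ∨
      (a ≤ (K - 1) * card s ∧ windowMap K a b s = shrinkParts (K - 1) a s ∧
        4 ≤ card (windowMap K a b s)) := by
  by_cases h2 : card s = 2
  · exact Or.inl ⟨h2, if_pos h2⟩
  · have h3 : 3 ≤ card s := by omega
    have := Nat.mul_le_mul_left (K - 1) h3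
    have hr : a ≤ (K - 1) * card s := by omega
    have hcard := card_shrinkParts hr
    rw [Nat.sub_add_cancel (by omega : 1 ≤ K)] at hcard
    have := Nat.mul_le_mul_left K h3
    refine Or.inr ⟨hr, if_neg h2, ?_⟩
    rw [windowMap, if_neg h2]
    omega

lemma windowMap_inj (hK : 3 ≤ K) (ha : a < 2 * K) (hμ : ∀ x ∈ μ.parts, K ≤ x)
    (hμ' : ∀ x ∈ μ'.parts, K ≤ x) (h2 : 2 ≤ card μ.parts) (h2' : 2 ≤ card μ'.parts)
    (h : windowMap K a b μ.parts = windowMap K a b μ'.parts) : μ = μ' := by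
  refine Nat.Partition.ext ?_
  rcases windowMap_cases hK ha h2 with ⟨h2, k⟩ | ⟨hr, k, k4⟩ <;>
    rcases windowMap_cases hK ha h2' with ⟨h2', k'⟩ | ⟨hr', k', k4'⟩
  · have hsup := congrArg Multiset.sup h
    rw [k, k', sup_twoParts (μ.sup_add_sub_bounds ha hμ h2).2,
      sup_twoParts (μ'.sup_add_sub_bounds ha hμ' h2').2] at hsup
    have hx : μ.parts.sup = μ'.parts.sup := by
      have := (μ.sup_add_sub_bounds ha hμ h2).2
      have := (μ'.sup_add_sub_bounds ha hμ' h2').2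
      omega
    rw [(Multiset.eq_pair_sup_of_card_eq_two h2).1, (Multiset.eq_pair_sup_of_card_eq_two h2').1,
      μ.parts_sum, μ'.parts_sum, hx]
  · have := card_twoParts_le (b := b) (u := μ.parts.sup + K - a)
    rw [← k, h] at this
    omega
  · have := card_twoParts_le (b := b) (u := μ'.parts.sup + K - a)
    rw [← k', ← h] at this
    omega
  · rw [k, k'] at h
    exact shrinkParts_inj (fun x hx => Nat.sub_le_of_le_add (by have := hμ x hx; omega))
      (fun x hx => Nat.sub_le_of_le_add (by have := hμ' x hx; omega)) hr hr' h

end windowMap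

lemma card_filter_card_parts_ne_one_lt_p {K a b : ℕ} (hK : 3 ≤ K) (ha : a < 2 * K) (hb : 3 ≤ b) :
    #{μ ∈ Nat.Partition.restricted (a + b) (K ≤ ·) | card μ.parts ≠ 1} < p b := by
  set R := {μ ∈ Nat.Partition.restricted (a + b) (K ≤ ·) | card μ.parts ≠ 1}
  have hR : ∀ μ ∈ R, (∀ x ∈ μ.parts, K ≤ x) ∧ 2 ≤ card μ.parts := fun μ hμ => by
    have := Multiset.card_pos.2 (μ.parts_ne_zero (by omega))
    simp only [R, Finset.mem_filter] at hμ
    exact ⟨Nat.Partition.mem_restricted.1 hμ.1, by omega⟩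
  have hcases := fun μ hμ => windowMap_cases (b := b) hK ha (hR μ hμ).2
  refine card_lt_p_of_injOn (f := fun μ => windowMap K a b μ.parts)
    (fun μ hμ μ' hμ' => windowMap_inj hK ha (hR μ hμ).1 (hR μ' hμ').1 (hR μ hμ).2 (hR μ' hμ').2)
    ?_ ⟨{1, 1, b - 2},
      fun hi => by simp only [insert_eq_cons, mem_cons, mem_singleton] at hi; omega,
      by simp only [insert_eq_cons, sum_cons, sum_singleton]; omega⟩ ?_
  · intro μ hμ
    rcases hcases μ hμ with ⟨h2, k⟩ | ⟨hr, k, -⟩ <;> simp only [k]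
    · obtain ⟨hu, hbu⟩ := μ.sup_add_sub_bounds ha (hR μ hμ).1 h2
      exact Nat.Partition.exists_parts_eq_twoParts hu hbu
    · exact Nat.Partition.exists_parts_eq_shrinkParts
        (fun x hx => by have := (hR μ hμ).1 x hx; omega) (by rw [μ.parts_sum, add_comm]) hr
  · intro μ hμ h
    have h3 := congrArg card h
    simp only [insert_eq_cons, card_cons, card_singleton] at h3
    rcases hcases μ hμ with ⟨-, k⟩ | ⟨-, -, k4⟩
    · have := card_twoParts_le (b := b) (u := μ.parts.sup + K - a)
      rw [← k] at this
      omega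
    · omega

lemma pGe_add_le_p {K a b : ℕ} (hK : 3 ≤ K) (ha : a < 2 * K) (hb : 3 ≤ b) :
    pGe K (a + b) ≤ p b := by
  have := pGe_le_card_filter_add_one K (a + b)
  have := card_filter_card_parts_ne_one_lt_p hK ha hb
  omega

lemma pGe_two_add_le_p {a b : ℕ} (ha : a = 2 ∨ a = 3) (hb : 6 ≤ b) : pGe 2 (a + b) ≤ p b := by
  have h := pGe_two_add_one_add_pGe_two_add_two_le hb
  rcases ha with rfl | rfl
  · rw [add_comm]
    omega
  · have h₃ : pGe 3 (b + 3) ≤ pGe 2 (b + 2) := pGe_succ_succ_le one_le_two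
    rw [add_comm, show b + 3 = b + 1 + 2 from rfl, pGe_add_self (b + 1) one_le_two]
    exact (Nat.add_le_add_left h₃ _).trans h

theorem pGe_add_le_mul {K a b : ℕ} (hK : 2 ≤ K) (ha : a = 0 ∨ K ≤ a) (hb : 6 ≤ b) :
    pGe K (a + b) ≤ pGe K a * p b := by
  rcases ha with rfl | hKa
  · simpa [pGe_zero_right] using pGe_le_p K b
  rcases lt_or_ge a (2 * K) with ha | ha
  · have hbase : pGe K (a + b) ≤ p b := by
      rcases eq_or_lt_of_le hK with rfl | hK
      · exact pGe_two_add_le_p (by omega) hb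
      · exact pGe_add_le_p hK ha (by omega)
    exact hbase.trans (Nat.le_mul_of_pos_left _ (one_le_pGe (by omega) hKa))
  · have h₁ := pGe_add_le_mul (K := K) (a := a - K) (b := b) hK (Or.inr (by omega)) hb
    have h₂ := pGe_add_le_mul (K := K + 1) (a := a) (b := b) (by omega) (Or.inr (by omega)) hb
    rw [pGe_eq_pGe_sub_add_pGe_succ (by omega) (by omega : K ≤ a + b),
      pGe_eq_pGe_sub_add_pGe_succ (by omega) hKa, show a + b - K = a - K + b by omega, add_mul]
    omega
termination_by 2 * a - K

lemma p_two : p 2 = 2 := by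
  simp (disch := omega) only [← pGe_one, pGe_eq_pGe_sub_add_pGe_succ, pGe_zero_right, pGe_eq_zero,
    Nat.reduceSub, Nat.reduceAdd]

theorem p_add_le_mul {a b : ℕ} (ha : 2 ≤ a) (hb : 6 ≤ b) : p (a + b) ≤ p a * p b := by
  induction a, ha using Nat.le_induction with
  | base =>
    have := pGe_two_add_one_add_pGe_two_add_two_le hb
    rw [p_two, show 2 + b = b + 1 + 1 by ring, p_succ, p_succ]
    show p b + pGe 2 (b + 1) + pGe 2 (b + 2) ≤ 2 * p b
    omega
  | succ a ha ih =>
    have := pGe_add_le_mul (K := 2) (a := a + 1) le_rfl (Or.inr (by omega)) hb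
    rw [show a + 1 + b = a + b + 1 by ring, p_succ, p_succ, add_mul,
      show a + b + 1 = a + 1 + b by ring]
    omega

theorem bessenrodt_ono (a b : ℕ) (ha : 2 ≤ a) (hb : 2 ≤ b) (hab : 8 < a + b) :
    p (a + b) ≤ p a * p b := by
  rcases le_or_gt 6 b with hb6 | hb6
  · exact p_add_le_mul ha hb6
  rcases le_or_gt 6 a with ha6 | ha6
  · rw [add_comm, mul_comm]
    exact p_add_le_mul hb ha6
  interval_cases a <;> interval_cases b <;> first
    | omega
    | simp (disch := omega) only [← pGe_one, pGe_eq_pGe_sub_add_pGe_succ, pGe_zero_right,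
        pGe_eq_zero, Nat.reduceSub, Nat.reduceAdd, Nat.reduceMul, Nat.reduceLeDiff]
end

section
/- In particular, for all integers n ≥ 100 and r ≥ 1, the second difference p(n) − 2 p(n+r) + p(n+2r) is strictly positive. -/
open Multiset Finset

namespace SecondDiff

lemma sup_mem {s : Multiset ℕ} (h : s ≠ 0) : s.sup ∈ s := by
  induction s using Multiset.induction_on with
  | empty => exact absurd rfl h
  | cons a t ih =>
    rw [Multiset.sup_cons]
    rcases eq_or_ne t 0 with rfl | ht
    · simp
    · rcases le_total a t.sup with h1 | h1
      · rw [sup_eq_right.mpr h1]; exact Multiset.mem_cons_of_mem (ih ht)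
      · rw [sup_eq_left.mpr h1]; exact Multiset.mem_cons_self _ _

lemma parts_ne_zero {k : ℕ} (hk : k ≠ 0) (π : Nat.Partition k) : π.parts ≠ 0 := by
  intro h
  apply hk
  rw [← π.parts_sum, h, Multiset.sum_zero]

lemma sup_mem_parts {k : ℕ} (hk : k ≠ 0) (π : Nat.Partition k) : π.parts.sup ∈ π.parts :=
  sup_mem (parts_ne_zero hk π)

/-- Bump: add 1 to a largest part. -/
def bump {k : ℕ} (hk : k ≠ 0) (π : Nat.Partition k) : Nat.Partition (k + 1) where
  parts := (π.parts.sup + 1) ::ₘ π.parts.erase π.parts.sup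
  parts_pos := by
    intro i hi
    rcases Multiset.mem_cons.mp hi with rfl | hi
    · exact Nat.succ_pos _
    · exact π.parts_pos (Multiset.mem_of_mem_erase hi)
  parts_sum := by
    have hmem := sup_mem_parts hk π
    have h1 : π.parts.sup + (π.parts.erase π.parts.sup).sum = k := by
      rw [← Multiset.sum_cons, Multiset.cons_erase hmem, π.parts_sum]
    rw [Multiset.sum_cons]
    omega

lemma bump_sup {k : ℕ} (hk : k ≠ 0) (π : Nat.Partition k) :
    (bump hk π).parts.sup = π.parts.sup + 1 := by
  rw [bump, Multiset.sup_cons]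
  have h : (π.parts.erase π.parts.sup).sup ≤ π.parts.sup :=
    Multiset.sup_mono (Multiset.erase_subset _ _)
  omega

lemma bump_count {k : ℕ} (hk : k ≠ 0) (π : Nat.Partition k) :
    ((bump hk π).parts).count ((bump hk π).parts.sup) = 1 := by
  rw [bump_sup, bump]
  simp only [Multiset.count_cons_self]
  have h : π.parts.sup + 1 ∉ π.parts := by
    intro h
    have := Multiset.le_sup h
    omega
  have h2 : π.parts.sup + 1 ∉ π.parts.erase π.parts.sup :=
    fun hc => h (Multiset.mem_of_mem_erase hc)
  rw [Multiset.count_eq_zero_of_notMem h2]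

lemma bump_injective {k : ℕ} (hk : k ≠ 0) : Function.Injective (bump hk) := by
  intro π₁ π₂ h
  have hp : (bump hk π₁).parts = (bump hk π₂).parts := by rw [h]
  have hs : π₁.parts.sup = π₂.parts.sup := by
    have := bump_sup hk π₁
    have := bump_sup hk π₂
    have hsup : (bump hk π₁).parts.sup = (bump hk π₂).parts.sup := by rw [h]
    omega
  rw [bump, bump] at hp
  simp only [hs] at hp
  have he : π₁.parts.erase π₂.parts.sup = π₂.parts.erase π₂.parts.sup :=
    (Multiset.cons_inj_right _).mp hp
  apply Nat.Partition.ext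
  have e1 := Multiset.cons_erase (sup_mem_parts hk π₁)
  have e2 := Multiset.cons_erase (sup_mem_parts hk π₂)
  rw [← e1, ← e2, hs, he]

lemma bump_no_one {k : ℕ} (hk : k ≠ 0) (π : Nat.Partition k) (h1 : 1 ∉ π.parts) :
    1 ∉ (bump hk π).parts := by
  rw [bump]
  intro hc
  rcases Multiset.mem_cons.mp hc with heq | hmem
  · have hpos := π.parts_pos (sup_mem_parts hk π)
    omega
  · exact h1 (Multiset.mem_of_mem_erase hmem)

/-- the set of partitions of `n` avoiding part 1 -/
def A2 (n : ℕ) : Finset (Nat.Partition n) :=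
  Finset.univ.filter (fun π => 1 ∉ π.parts)

/-- witness partition of `m+2` (for `6 ≤ m`) with repeated maximal part and no 1s -/
def witness (m : ℕ) (hm : 6 ≤ m) : Nat.Partition (m + 2) where
  parts := if m % 2 = 0 then Multiset.replicate ((m + 2) / 2) 2
    else 3 ::ₘ 3 ::ₘ 3 ::ₘ Multiset.replicate ((m - 7) / 2) 2
  parts_pos := by
    intro i hi
    split_ifs at hi with h
    · rw [Multiset.eq_of_mem_replicate hi]; omega
    · rcases Multiset.mem_cons.mp hi with rfl | hi
      · omega
      rcases Multiset.mem_cons.mp hi with rfl | hi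
      · omega
      rcases Multiset.mem_cons.mp hi with rfl | hi
      · omega
      · rw [Multiset.eq_of_mem_replicate hi]; omega
  parts_sum := by
    split_ifs with h
    · rw [Multiset.sum_replicate, smul_eq_mul]; omega
    · simp only [Multiset.sum_cons, Multiset.sum_replicate, smul_eq_mul]; omega

lemma witness_parts (m : ℕ) (hm : 6 ≤ m) : (witness m hm).parts =
    (if m % 2 = 0 then Multiset.replicate ((m + 2) / 2) 2
      else 3 ::ₘ 3 ::ₘ 3 ::ₘ Multiset.replicate ((m - 7) / 2) 2) := rfl

lemma witness_no_one (m : ℕ) (hm : 6 ≤ m) : 1 ∉ (witness m hm).parts := by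
  intro hc
  have := (witness m hm).parts_pos hc
  have h2 : (2 : ℕ) ≤ 1 := by
    rw [witness_parts] at hc
    split_ifs at hc with h
    · rw [Multiset.eq_of_mem_replicate hc]
    · rcases Multiset.mem_cons.mp hc with heq | hc
      · omega
      rcases Multiset.mem_cons.mp hc with heq | hc
      · omega
      rcases Multiset.mem_cons.mp hc with heq | hc
      · omega
      · rw [Multiset.eq_of_mem_replicate hc]
  omega

lemma witness_count (m : ℕ) (hm : 6 ≤ m) :
    2 ≤ (witness m hm).parts.count ((witness m hm).parts.sup) := by
  rw [witness_parts]
  split_ifs with h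
  · have ht : 2 ≤ (m + 2) / 2 := by omega
    have hsup : (Multiset.replicate ((m + 2) / 2) 2).sup = 2 := by
      apply le_antisymm
      · rw [Multiset.sup_le]
        intro b hb
        rw [Multiset.eq_of_mem_replicate hb]
      · apply Multiset.le_sup
        apply Multiset.mem_replicate.mpr
        exact ⟨by omega, rfl⟩
    rw [hsup, Multiset.count_replicate_self]
    omega
  · have hsup : (3 ::ₘ 3 ::ₘ 3 ::ₘ Multiset.replicate ((m - 7) / 2) 2).sup = 3 := by
      apply le_antisymm
      · rw [Multiset.sup_le]
        intro b hb
        rcases Multiset.mem_cons.mp hb with rfl | hb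
        · rfl
        rcases Multiset.mem_cons.mp hb with rfl | hb
        · rfl
        rcases Multiset.mem_cons.mp hb with rfl | hb
        · rfl
        · rw [Multiset.eq_of_mem_replicate hb]; omega
      · exact Multiset.le_sup (Multiset.mem_cons_self _ _)
    rw [hsup]
    simp [Multiset.count_cons, Multiset.count_replicate]

lemma cardA2_lt (m : ℕ) (hm : 6 ≤ m) : (A2 (m + 1)).card < (A2 (m + 2)).card := by
  have hk : m + 1 ≠ 0 := by omega
  set f := bump hk with hf
  have himg : (A2 (m + 1)).image f ⊆ A2 (m + 2) := by
    intro μ hμ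
    rcases Finset.mem_image.mp hμ with ⟨π, hπ, rfl⟩
    rw [A2, Finset.mem_filter] at hπ ⊢
    exact ⟨Finset.mem_univ _, bump_no_one hk π hπ.2⟩
  have hwit : witness m hm ∈ A2 (m + 2) := by
    rw [A2, Finset.mem_filter]
    exact ⟨Finset.mem_univ _, witness_no_one m hm⟩
  have hwitnot : witness m hm ∉ (A2 (m + 1)).image f := by
    intro hc
    rcases Finset.mem_image.mp hc with ⟨π, _, heq⟩
    have h1 := bump_count hk π
    have h2 := witness_count m hm
    rw [hf] at heq
    rw [heq] at h1
    omega
  calc (A2 (m + 1)).card = ((A2 (m + 1)).image f).card :=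
        (Finset.card_image_of_injective _ (bump_injective hk)).symm
    _ < (A2 (m + 2)).card :=
        Finset.card_lt_card (Finset.ssubset_iff_of_subset himg |>.mpr ⟨_, hwit, hwitnot⟩)

/-- adding a part 1 -/
def addOne {k : ℕ} (π : Nat.Partition k) : Nat.Partition (k + 1) where
  parts := 1 ::ₘ π.parts
  parts_pos := by
    intro i hi
    rcases Multiset.mem_cons.mp hi with rfl | hi
    · omega
    · exact π.parts_pos hi
  parts_sum := by rw [Multiset.sum_cons, π.parts_sum, Nat.add_comm]

lemma card_with_one (m : ℕ) :
    (Finset.univ.filter (fun π : Nat.Partition (m + 1) => 1 ∈ π.parts)).card = p m := by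
  rw [p, ← Fintype.card_coe, Fintype.card, Fintype.card]
  symm
  apply Finset.card_bij (fun (π : Nat.Partition m) _ => (⟨addOne π, by
      simp only [Finset.mem_filter, Finset.mem_univ, true_and, addOne]
      exact Multiset.mem_cons_self _ _⟩ : {x // x ∈ Finset.univ.filter
        (fun π : Nat.Partition (m + 1) => 1 ∈ π.parts)}))
  · intro a _; exact Finset.mem_univ _
  · intro a _ b _ h
    apply Nat.Partition.ext
    have : (addOne a).parts = (addOne b).parts := by
      have := congrArg (fun x => (x : {x // x ∈ Finset.univ.filter
        (fun π : Nat.Partition (m + 1) => 1 ∈ π.parts)}).val.parts) h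
      exact this
    rw [addOne, addOne] at this
    exact (Multiset.cons_inj_right _).mp this
  · rintro ⟨μ, hμ⟩ _
    simp only [Finset.mem_filter, Finset.mem_univ, true_and] at hμ
    refine ⟨⟨μ.parts.erase 1, ?_, ?_⟩, Finset.mem_univ _, ?_⟩
    · intro i hi; exact μ.parts_pos (Multiset.mem_of_mem_erase hi)
    · have : μ.parts = 1 ::ₘ μ.parts.erase 1 := (Multiset.cons_erase hμ).symm
      have hs := μ.parts_sum
      rw [this, Multiset.sum_cons] at hs
      omega
    · apply Subtype.ext
      apply Nat.Partition.ext
      show (1 ::ₘ μ.parts.erase 1) = μ.parts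
      exact Multiset.cons_erase hμ

lemma p_split (m : ℕ) : p (m + 1) = p m + (A2 (m + 1)).card := by
  rw [← card_with_one m, A2, p, Fintype.card]
  exact (Finset.card_filter_add_card_filter_not _).symm

lemma key (m : ℕ) (hm : 6 ≤ m) : 2 * p (m + 1) < p m + p (m + 2) := by
  have h1 := p_split m
  have h2 : p (m + 2) = p (m + 1) + (A2 (m + 2)).card := p_split (m + 1)
  have h3 := cardA2_lt m hm
  omega

/-- first difference -/
def g (m : ℕ) : ℤ := (p (m + 1) : ℤ) - p m

lemma g_lt (m : ℕ) (hm : 6 ≤ m) : g m < g (m + 1) := by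
  have := key m hm
  rw [g, g]
  have : (2 : ℤ) * p (m + 1) < p m + p (m + 2) := by exact_mod_cast this
  linarith

lemma g_strict (a b : ℕ) (ha : 6 ≤ a) (hab : a < b) : g a < g b := by
  induction b with
  | zero => omega
  | succ b ih =>
    rcases Nat.lt_succ_iff_lt_or_eq.mp hab with h | rfl
    · exact lt_trans (ih h) (g_lt b (by omega))
    · exact g_lt a ha

lemma telescope (n r : ℕ) : (p (n + r) : ℤ) - p n = ∑ k ∈ Finset.range r, g (n + k) := by
  induction r with
  | zero => simp
  | succ r ih =>
    rw [Finset.sum_range_succ, ← ih, g, ← Nat.add_assoc]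
    ring

end SecondDiff

theorem second_difference_pos (n r : ℕ) (hn : 100 ≤ n) (hr : 1 ≤ r) :
    2 * p (n + r) < p n + p (n + 2 * r) := by
  open SecondDiff in
  have h1 := telescope n r
  have h2 := telescope (n + r) r
  have hsum : ∑ k ∈ Finset.range r, g (n + k) < ∑ k ∈ Finset.range r, g (n + r + k) := by
    apply Finset.sum_lt_sum_of_nonempty
    · exact Finset.nonempty_range_iff.mpr (by omega)
    · intro k _
      have : n + r + k = (n + k) + r := by omega
      rw [this]
      exact g_strict (n + k) (n + k + r) (by omega) (by omega)
  have heq : n + r + r = n + 2 * r := by omega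
  rw [heq] at h2
  have : (2 : ℤ) * p (n + r) < p n + p (n + 2 * r) := by linarith
  exact_mod_cast this
end

section
/- For all complex w and all integers L ≥ 1, |(e^{w/2} − e^{−w/2})² − 2 ∑_{ℓ=1}^{L−1} w^{2ℓ}/(2ℓ)!| ≤ (2/(2L−1)!) |w|^{2L} e^{|Re(w)|}. -/
/-!
Since `(e^{w/2} - e^{-w/2})² = e^w + e^{-w} - 2`, the error is the sum of the order-`2L` Taylor
remainders of `exp` at `w` and at `-w`. The remainder `R_N` satisfies `R_{N+1}' = R_N`, so by
induction on `N` and the mean value inequality along `t ↦ t w`, `t ∈ [0, 1]`, on which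
`|e^{t w}| ≤ e^{|Re w|}`, one gets `|R_N(w)| ≤ |w|^N / N! · e^{|Re w|}`.
-/

open Finset

noncomputable def expRem (N : ℕ) (z : ℂ) : ℂ :=
  Complex.exp z - ∑ n ∈ range N, z ^ n / n.factorial

lemma expRem_zero_right {N : ℕ} (hN : N ≠ 0) : expRem N 0 = 0 := by
  obtain ⟨M, rfl⟩ := Nat.exists_eq_succ_of_ne_zero hN
  simp [expRem, sum_range_succ']

lemma hasDerivAt_sum_range_pow_div_factorial (N : ℕ) (z : ℂ) :
    HasDerivAt (fun z : ℂ => ∑ n ∈ range (N + 1), z ^ n / n.factorial)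
      (∑ n ∈ range N, z ^ n / n.factorial) z := by
  refine (HasDerivAt.fun_sum fun n _ =>
    (hasDerivAt_pow n z).div_const (n.factorial : ℂ)).congr_deriv ?_
  rw [sum_range_succ']
  simp only [CharP.cast_eq_zero, zero_mul, zero_div, add_zero, Nat.add_sub_cancel]
  refine sum_congr rfl fun n _ => ?_
  rw [Nat.factorial_succ]
  push_cast
  field_simp

lemma hasDerivAt_expRem_succ (N : ℕ) (z : ℂ) :
    HasDerivAt (expRem (N + 1)) (expRem N z) z :=
  (Complex.hasDerivAt_exp z).sub (hasDerivAt_sum_range_pow_div_factorial N z)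

lemma norm_exp_ofReal_mul_le {z : ℂ} {t : ℝ} (ht : t ∈ Set.Icc (0 : ℝ) 1) :
    ‖Complex.exp (t * z)‖ ≤ Real.exp |z.re| := by
  rw [Complex.norm_exp, Real.exp_le_exp, Complex.re_ofReal_mul]
  calc t * z.re ≤ t * |z.re| := mul_le_mul_of_nonneg_left (le_abs_self _) ht.1
    _ ≤ |z.re| := mul_le_of_le_one_left (abs_nonneg _) ht.2

lemma norm_expRem_ofReal_mul_le (z : ℂ) (N : ℕ) {t : ℝ} (ht : t ∈ Set.Icc (0 : ℝ) 1) :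
    ‖expRem N (t * z)‖ ≤ (‖z‖ * t) ^ N / N.factorial * Real.exp |z.re| := by
  induction N generalizing t with
  | zero => simpa [expRem] using norm_exp_ofReal_mul_le ht
  | succ N ih =>
    have hf (s : ℝ) :
        HasDerivAt (fun s : ℝ => expRem (N + 1) (s * z)) (expRem N (s * z) * z) s := by
      simpa using ((hasDerivAt_expRem_succ N _).comp (s : ℂ)
        ((hasDerivAt_id (s : ℂ)).mul_const z)).comp_ofReal
    have hB (s : ℝ) :
        HasDerivAt (fun s => (‖z‖ * s) ^ (N + 1) / (N + 1).factorial * Real.exp |z.re|)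
          ((‖z‖ * s) ^ N / N.factorial * Real.exp |z.re| * ‖z‖) s := by
      have := ((((hasDerivAt_id' s).const_mul ‖z‖).pow (N + 1)).div_const
        ((N + 1).factorial : ℝ)).mul_const (Real.exp |z.re|)
      refine this.congr_deriv ?_
      rw [Nat.factorial_succ]
      push_cast
      field_simp
    refine image_norm_le_of_norm_deriv_right_le_deriv_boundary
      (fun s _ => (hf s).continuousAt.continuousWithinAt) (fun s _ => (hf s).hasDerivWithinAt)
      (by simp [expRem_zero_right]) hB (fun s hs => ?_) ht
    rw [norm_mul]
    exact mul_le_mul_of_nonneg_right (ih (Set.Ico_subset_Icc_self hs)) (norm_nonneg z)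

lemma norm_expRem_le (z : ℂ) (N : ℕ) :
    ‖expRem N z‖ ≤ ‖z‖ ^ N / N.factorial * Real.exp |z.re| := by
  simpa using norm_expRem_ofReal_mul_le z N (t := 1) (by simp)

lemma sum_range_two_mul_pow_add_neg_pow_mul {R : Type*} [Ring R] (x : R) (c : ℕ → R) (L : ℕ) :
    ∑ n ∈ range (2 * L), (x ^ n + (-x) ^ n) * c n
      = 2 * ∑ ℓ ∈ range L, x ^ (2 * ℓ) * c (2 * ℓ) := by
  induction L with
  | zero => simp
  | succ L ih =>
    rw [mul_add_one, sum_range_succ, sum_range_succ, ih, sum_range_succ,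
      (even_two_mul L).neg_pow, (odd_two_mul_add_one L).neg_pow]
    noncomm_ring

lemma expRem_add_expRem_neg (w : ℂ) (L : ℕ) :
    expRem (2 * L) w + expRem (2 * L) (-w)
      = Complex.exp w + Complex.exp (-w) - 2 * ∑ ℓ ∈ range L, w ^ (2 * ℓ) / (2 * ℓ).factorial := by
  have hsum := sum_range_two_mul_pow_add_neg_pow_mul w (fun n => ((n.factorial : ℂ))⁻¹) L
  simp only [← div_eq_mul_inv, add_div, sum_add_distrib] at hsum
  rw [expRem, expRem, ← hsum]
  ring

lemma exp_half_sub_exp_neg_half_sq (w : ℂ) :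
    (Complex.exp (w / 2) - Complex.exp (-w / 2)) ^ 2 = Complex.exp w + Complex.exp (-w) - 2 := by
  have hsq (u : ℂ) : Complex.exp (u / 2) ^ 2 = Complex.exp u := by
    rw [← Complex.exp_nat_mul]; ring_nf
  have hprod : Complex.exp (w / 2) * Complex.exp (-w / 2) = 1 := by
    rw [← Complex.exp_add, neg_div, add_neg_cancel, Complex.exp_zero]
  linear_combination hsq w + hsq (-w) - 2 * hprod

theorem sinh_sq_taylor_error (w : ℂ) (L : ℕ) (hL : 1 ≤ L) :
    ‖(Complex.exp (w / 2) - Complex.exp (-w / 2)) ^ 2 -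
        2 * ∑ ℓ ∈ Finset.Icc 1 (L - 1), w ^ (2 * ℓ) / ((2 * ℓ).factorial : ℂ)‖ ≤
      2 / ((2 * L - 1).factorial : ℝ) * ‖w‖ ^ (2 * L) * Real.exp |w.re| := by
  obtain ⟨K, rfl⟩ := Nat.exists_eq_add_of_le' hL
  have hsum : ∑ ℓ ∈ range (K + 1), w ^ (2 * ℓ) / ((2 * ℓ).factorial : ℂ)
      = 1 + ∑ ℓ ∈ Icc 1 K, w ^ (2 * ℓ) / ((2 * ℓ).factorial : ℂ) := by
    rw [range_eq_Ico, sum_eq_sum_Ico_succ_bot K.succ_pos, zero_add, Nat.succ_eq_add_one,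
      Ico_add_one_right_eq_Icc]
    simp
  have hrem : (Complex.exp (w / 2) - Complex.exp (-w / 2)) ^ 2 -
        2 * ∑ ℓ ∈ Icc 1 (K + 1 - 1), w ^ (2 * ℓ) / ((2 * ℓ).factorial : ℂ)
      = expRem (2 * (K + 1)) w + expRem (2 * (K + 1)) (-w) := by
    rw [expRem_add_expRem_neg, hsum, exp_half_sub_exp_neg_half_sq, Nat.add_sub_cancel]
    ring
  have hfact : ((2 * (K + 1) - 1).factorial : ℝ) ≤ (2 * (K + 1)).factorial :=
    mod_cast Nat.factorial_le (Nat.sub_le _ _)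
  calc _ = ‖expRem (2 * (K + 1)) w + expRem (2 * (K + 1)) (-w)‖ := by rw [hrem]
    _ ≤ ‖w‖ ^ (2 * (K + 1)) / (2 * (K + 1)).factorial * Real.exp |w.re|
        + ‖-w‖ ^ (2 * (K + 1)) / (2 * (K + 1)).factorial * Real.exp |(-w).re| :=
      (norm_add_le _ _).trans (add_le_add (norm_expRem_le _ _) (norm_expRem_le _ _))
    _ = 2 / (2 * (K + 1)).factorial * ‖w‖ ^ (2 * (K + 1)) * Real.exp |w.re| := by
      rw [norm_neg, Complex.neg_re, abs_neg]; ring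
    _ ≤ _ := by gcongr
end

section
/- Let n and m ≥ 0 be integers, β > 0 real, Z = β + iy with |y| ≤ β, and define H_m(e^{−Z}) := ∑_{r≥1} (−1)^{r+1} e^{−(3r²/2 + (m+1/2)r)Z} (e^{rZ/2} − e^{−rZ/2})². Then |H_m(e^{−Z})| ≤ 4 ∑_{r≥0} e^{−β r²/2}. -/
open Complex

/-!
Since `‖e^{-aZ}‖ = e^{-a Re Z}` and `‖e^{w} - e^{-w}‖ ≤ 2 e^{Re w}` for `Re w ≥ 0`,
the `r`-th term is at most `4 e^{-(3r²/2 + (m - 1/2) r) Re Z} ≤ 4 e^{-Re Z · r²/2}`.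
The Gaussian majorant is summable, and dropping its `r = 0` term only increases the bound.
-/

lemma Complex.norm_exp_sub_exp_neg_le {w : ℂ} (hw : 0 ≤ w.re) :
    ‖exp w - exp (-w)‖ ≤ 2 * Real.exp w.re := by
  have h_neg : Real.exp (-w.re) ≤ Real.exp w.re := Real.exp_le_exp.2 (by linarith)
  calc ‖exp w - exp (-w)‖ ≤ Real.exp w.re + Real.exp (-w.re) := by
        simpa only [norm_exp, neg_re] using norm_sub_le (exp w) (exp (-w))
    _ ≤ 2 * Real.exp w.re := by linarith

lemma Complex.norm_exp_mul_sub_exp_neg_sq_le (u : ℂ) {w : ℂ} (hw : 0 ≤ w.re) :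
    ‖exp u * (exp w - exp (-w)) ^ 2‖ ≤ 4 * Real.exp (u.re + 2 * w.re) := by
  rw [norm_mul, norm_pow, norm_exp]
  calc Real.exp u.re * ‖exp w - exp (-w)‖ ^ 2
      ≤ Real.exp u.re * (2 * Real.exp w.re) ^ 2 := by
        gcongr
        exact norm_exp_sub_exp_neg_le hw
    _ = 4 * Real.exp (u.re + 2 * w.re) := by
        rw [two_mul w.re, Real.exp_add, Real.exp_add]
        ring

lemma pentagonal_exponent_le {β m r : ℝ} (hβ : 0 ≤ β) (hm : 0 ≤ m) (hr : 1 / 2 ≤ r) :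
    -(3 * r ^ 2 / 2 + (m + 1 / 2) * r) * β + 2 * (r * β / 2) ≤ -β * r ^ 2 / 2 := by
  nlinarith [mul_nonneg hβ (mul_nonneg (by linarith : 0 ≤ r) (by linarith : 0 ≤ r + m - 1 / 2))]

lemma norm_Hm_term_le (m k : ℕ) {Z : ℂ} (hZ : 0 ≤ Z.re) :
    ‖(-1 : ℂ) ^ k *
        exp (-(3 * ((k : ℂ) + 1) ^ 2 / 2 + ((m : ℂ) + 1 / 2) * ((k : ℂ) + 1)) * Z) *
        (exp (((k : ℂ) + 1) * Z / 2) - exp (-(((k : ℂ) + 1) * Z) / 2)) ^ 2‖ ≤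
      4 * Real.exp (-Z.re * ((k + 1 : ℕ) : ℝ) ^ 2 / 2) := by
  set r : ℝ := ((k + 1 : ℕ) : ℝ)
  have hr : 1 / 2 ≤ r := by simp only [r, Nat.cast_succ]; linarith [k.cast_nonneg (α := ℝ)]
  have hu : (-(3 * ((k : ℂ) + 1) ^ 2 / 2 + ((m : ℂ) + 1 / 2) * ((k : ℂ) + 1)) * Z).re =
      -(3 * r ^ 2 / 2 + ((m : ℝ) + 1 / 2) * r) * Z.re := by
    rw [show -(3 * ((k : ℂ) + 1) ^ 2 / 2 + ((m : ℂ) + 1 / 2) * ((k : ℂ) + 1)) * Z =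
        ((-(3 * r ^ 2 / 2 + ((m : ℝ) + 1 / 2) * r) : ℝ) : ℂ) * Z by push_cast [r]; ring,
      re_ofReal_mul]
  have hw : (((k : ℂ) + 1) * Z / 2).re = r * Z.re / 2 := by
    rw [show ((k : ℂ) + 1) * Z / 2 = ((r / 2 : ℝ) : ℂ) * Z by push_cast [r]; ring, re_ofReal_mul]
    ring
  rw [mul_assoc, norm_mul, norm_pow, norm_neg, norm_one, one_pow, one_mul, neg_div]
  refine (norm_exp_mul_sub_exp_neg_sq_le _ (by rw [hw]; positivity)).trans ?_
  rw [hu, hw]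
  gcongr
  exact pentagonal_exponent_le hZ m.cast_nonneg hr

lemma summable_exp_neg_mul_sq_div_two {β : ℝ} (hβ : 0 < β) :
    Summable fun r : ℕ => Real.exp (-β * (r : ℝ) ^ 2 / 2) := by
  have h := Real.summable_exp_nat_mul_of_ge (c := -β / 2) (by linarith) (f := fun r : ℕ => (r : ℝ) ^ 2)
    fun r => by exact_mod_cast Nat.le_self_pow two_ne_zero r
  refine h.congr fun r => ?_
  ring_nf

theorem Hm_bound_general (m : ℕ) (β y : ℝ) (hβ : 0 < β) :
    ‖∑' k : ℕ, (-1 : ℂ) ^ k *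
        Complex.exp (-(3 * ((k : ℂ) + 1) ^ 2 / 2 + ((m : ℂ) + 1 / 2) * ((k : ℂ) + 1)) *
          ((β : ℂ) + Complex.I * (y : ℂ))) *
        (Complex.exp (((k : ℂ) + 1) * ((β : ℂ) + Complex.I * (y : ℂ)) / 2) -
          Complex.exp (-(((k : ℂ) + 1) * ((β : ℂ) + Complex.I * (y : ℂ))) / 2)) ^ 2‖ ≤
      4 * ∑' r : ℕ, Real.exp (-β * (r : ℝ) ^ 2 / 2) := by
  have hZ : ((β : ℂ) + I * y).re = β := by simp
  have hg := summable_exp_neg_mul_sq_div_two hβ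
  have hg_succ : Summable fun k : ℕ => Real.exp (-β * ((k + 1 : ℕ) : ℝ) ^ 2 / 2) :=
    hg.comp_injective (add_left_injective 1)
  calc _ ≤ ∑' k : ℕ, 4 * Real.exp (-β * ((k + 1 : ℕ) : ℝ) ^ 2 / 2) :=
        tsum_of_norm_bounded (hg_succ.mul_left 4).hasSum fun k => by
          simpa only [hZ] using norm_Hm_term_le m k (Z := β + I * y) (by rw [hZ]; exact hβ.le)
    _ = 4 * ∑' k : ℕ, Real.exp (-β * ((k + 1 : ℕ) : ℝ) ^ 2 / 2) := tsum_mul_left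
    _ ≤ 4 * ∑' r : ℕ, Real.exp (-β * (r : ℝ) ^ 2 / 2) := by
        refine mul_le_mul_of_nonneg_left ?_ zero_le_four
        exact tsum_comp_le_tsum_of_inj hg (fun _ => (Real.exp_pos _).le) (add_left_injective 1)

theorem Hm_bound (m : ℕ) (β y : ℝ) (hβ : 0 < β) (hy : |y| ≤ β) :
    ‖∑' k : ℕ, (-1 : ℂ) ^ k *
        Complex.exp (-(3 * ((k : ℂ) + 1) ^ 2 / 2 + ((m : ℂ) + 1 / 2) * ((k : ℂ) + 1)) *
          ((β : ℂ) + Complex.I * (y : ℂ))) *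
        (Complex.exp (((k : ℂ) + 1) * ((β : ℂ) + Complex.I * (y : ℂ)) / 2) -
          Complex.exp (-(((k : ℂ) + 1) * ((β : ℂ) + Complex.I * (y : ℂ))) / 2)) ^ 2‖ ≤
      4 * ∑' r : ℕ, Real.exp (-β * (r : ℝ) ^ 2 / 2) :=
  Hm_bound_general m β y hβ
end

section
/- For all integers n ≥ 11523 and all integers m with n/2 − 2 ≤ m ≤ n − 103, we have N(m,n) − N(m+1,n) = p(ω₁) − 2p(ω₁ + 1) + p(ω₁ + 2) > 0, where ω₁ = n − m − 3. -/
/-- The Dyson rank of a partition: largest part minus number of parts. -/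
def rank {n : ℕ} (π : Nat.Partition n) : ℤ :=
  (π.parts.sup : ℤ) - (Multiset.card π.parts : ℤ)

/-- `N m n` is the number of partitions of `n` with rank `m`. -/
def N (m : ℤ) (n : ℕ) : ℕ :=
  Fintype.card {π : Nat.Partition n // rank π = m}

lemma msup_mem {s : Multiset ℕ} (h : s ≠ 0) : s.sup ∈ s := by
  induction s using Multiset.induction with
  | empty => simp at h
  | cons a s ih =>
    rw [Multiset.sup_cons]
    rcases eq_or_ne s 0 with rfl | hs
    · simp
    · rcases le_total a s.sup with h1 | h1
      · rw [sup_eq_right.2 h1]; exact Multiset.mem_cons_of_mem (ih hs)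
      · rw [sup_eq_left.2 h1]; exact Multiset.mem_cons_self a s

lemma sum_map_add_one (s : Multiset ℕ) :
    (s.map (· + 1)).sum = s.sum + Multiset.card s := by
  induction s using Multiset.induction with
  | empty => simp
  | cons a s ih => simp [ih]; omega

lemma sum_map_sub_one (s : Multiset ℕ) (h : ∀ x ∈ s, 1 ≤ x) :
    (s.map (· - 1)).sum + Multiset.card s = s.sum := by
  induction s using Multiset.induction with
  | empty => simp
  | cons a s ih =>
    have ha : 1 ≤ a := h a (Multiset.mem_cons_self a s)
    have := ih (fun x hx => h x (Multiset.mem_cons_of_mem hx))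
    simp only [Multiset.map_cons, Multiset.sum_cons, Multiset.card_cons]
    omega

/-- `Q t` counts partitions of `t` with no part equal to `1`. -/
def Q (t : ℕ) : ℕ := Fintype.card {σ : Nat.Partition t // 1 ∉ σ.parts}

def withOneEquiv (t : ℕ) (ht : 1 ≤ t) :
    {σ : Nat.Partition t // 1 ∈ σ.parts} ≃ Nat.Partition (t - 1) where
  toFun σ := ⟨σ.1.parts.erase 1,
    fun hi => σ.1.parts_pos (Multiset.mem_of_mem_erase hi), by
      have h := Multiset.cons_erase σ.2
      have : (1 ::ₘ σ.1.parts.erase 1).sum = t := by rw [h, σ.1.parts_sum]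
      simp only [Multiset.sum_cons] at this
      omega⟩
  invFun τ := ⟨⟨1 ::ₘ τ.parts,
    fun hi => by
      rcases Multiset.mem_cons.1 hi with rfl | hi
      · norm_num
      · exact τ.parts_pos hi, by
      simp only [Multiset.sum_cons, τ.parts_sum]; omega⟩,
    Multiset.mem_cons_self 1 _⟩
  left_inv σ := by
    apply Subtype.ext; apply Nat.Partition.ext
    exact Multiset.cons_erase σ.2
  right_inv τ := by
    apply Nat.Partition.ext
    exact Multiset.erase_cons_head 1 τ.parts

lemma p_eq (t : ℕ) (ht : 1 ≤ t) : p t = p (t - 1) + Q t := by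
  rw [p, Q, ← Fintype.card_congr (Equiv.sumCompl (fun σ : Nat.Partition t => 1 ∈ σ.parts)),
    Fintype.card_sum, Fintype.card_congr (withOneEquiv t ht), p]

lemma sup_helper (n m : ℕ) (h1 : n ≤ 2 * m + 4) (σ : Nat.Partition (n - m - 1)) :
    ((m + Multiset.card σ.parts + 1) ::ₘ σ.parts.map (· - 1)).sup
      = m + Multiset.card σ.parts + 1 := by
  rw [Multiset.sup_cons, sup_eq_left, Multiset.sup_le]
  intro b hb
  obtain ⟨x, hx, rfl⟩ := Multiset.mem_map.1 hb
  have hxs : x ≤ σ.parts.sum := Multiset.single_le_sum (fun y _ => Nat.zero_le y) x hx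
  have hj : 1 ≤ Multiset.card σ.parts := by
    rw [Nat.one_le_iff_ne_zero, Ne, Multiset.card_eq_zero]
    intro h0; rw [h0] at hx; simp at hx
  have hs := σ.parts_sum
  omega

def rankEquiv (n m : ℕ) (h1 : n ≤ 2 * m + 4) (h2 : m + 2 ≤ n) :
    {π : Nat.Partition n // rank π = (m : ℤ)} ≃
      {σ : Nat.Partition (n - m - 1) // 1 ∉ σ.parts} where
  toFun π := ⟨⟨(π.1.parts.erase π.1.parts.sup).map (· + 1), by
      intro i hi
      obtain ⟨x, hx, rfl⟩ := Multiset.mem_map.1 hi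
      omega, by
      rw [sum_map_add_one]
      have hne : π.1.parts ≠ 0 := by
        intro h0
        have hps := π.1.parts_sum
        rw [h0] at hps; simp at hps; omega
      have hM : π.1.parts.sup ∈ π.1.parts := msup_mem hne
      have hkey : π.1.parts.sup + (π.1.parts.erase π.1.parts.sup).sum = n := by
        have := congrArg Multiset.sum (Multiset.cons_erase hM)
        rwa [Multiset.sum_cons, π.1.parts_sum] at this
      have hcard : Multiset.card (π.1.parts.erase π.1.parts.sup)
          = Multiset.card π.1.parts - 1 := Multiset.card_erase_of_mem hM
      have hk : 1 ≤ Multiset.card π.1.parts := by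
        rwa [Nat.one_le_iff_ne_zero, Ne, Multiset.card_eq_zero]
      have hMk : π.1.parts.sup = m + Multiset.card π.1.parts := by
        have h := π.2
        rw [rank, sub_eq_iff_eq_add] at h
        exact_mod_cast h
      omega⟩, by
      intro h1mem
      obtain ⟨x, hx, hx1⟩ := Multiset.mem_map.1 h1mem
      have := π.1.parts_pos (Multiset.mem_of_mem_erase hx)
      omega⟩
  invFun σ := ⟨⟨(m + Multiset.card σ.1.parts + 1) ::ₘ σ.1.parts.map (· - 1), by
      intro i hi
      rcases Multiset.mem_cons.1 hi with rfl | hi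
      · omega
      · obtain ⟨x, hx, rfl⟩ := Multiset.mem_map.1 hi
        have h2x := σ.1.parts_pos hx
        have h1x : x ≠ 1 := fun e => σ.2 (e ▸ hx)
        omega, by
      have hs := sum_map_sub_one σ.1.parts (fun x hx => σ.1.parts_pos hx)
      have ht := σ.1.parts_sum
      rw [Multiset.sum_cons]
      omega⟩, by
    show ((((m + Multiset.card σ.1.parts + 1) ::ₘ σ.1.parts.map (· - 1)).sup : ℕ) : ℤ)
        - (Multiset.card ((m + Multiset.card σ.1.parts + 1) ::ₘ σ.1.parts.map (· - 1)) : ℤ)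
        = (m : ℤ)
    rw [sup_helper n m h1 σ.1, Multiset.card_cons, Multiset.card_map]
    push_cast
    ring⟩
  left_inv π := by
    apply Subtype.ext; apply Nat.Partition.ext
    show (m + Multiset.card ((π.1.parts.erase π.1.parts.sup).map (· + 1)) + 1) ::ₘ
        ((π.1.parts.erase π.1.parts.sup).map (· + 1)).map (· - 1) = π.1.parts
    have hne : π.1.parts ≠ 0 := by
      intro h0
      have hps := π.1.parts_sum
      rw [h0] at hps; simp at hps; omega
    have hM : π.1.parts.sup ∈ π.1.parts := msup_mem hne
    have hk : 1 ≤ Multiset.card π.1.parts := by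
      rwa [Nat.one_le_iff_ne_zero, Ne, Multiset.card_eq_zero]
    have hMk : π.1.parts.sup = m + Multiset.card π.1.parts := by
      have h := π.2
      rw [rank, sub_eq_iff_eq_add] at h
      exact_mod_cast h
    have hmap : ((π.1.parts.erase π.1.parts.sup).map (· + 1)).map (· - 1)
        = π.1.parts.erase π.1.parts.sup := by
      rw [Multiset.map_map]
      exact (Multiset.map_congr rfl (fun x _ => by simp)).trans (Multiset.map_id _)
    rw [hmap, Multiset.card_map, Multiset.card_erase_of_mem hM, Nat.pred_eq_sub_one]
    have hc : m + (Multiset.card π.1.parts - 1) + 1 = π.1.parts.sup := by omega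
    rw [hc, Multiset.cons_erase hM]
  right_inv σ := by
    apply Subtype.ext; apply Nat.Partition.ext
    show ((((m + Multiset.card σ.1.parts + 1) ::ₘ σ.1.parts.map (· - 1)).erase
        (((m + Multiset.card σ.1.parts + 1) ::ₘ σ.1.parts.map (· - 1)).sup)).map (· + 1))
        = σ.1.parts
    rw [sup_helper n m h1 σ.1, Multiset.erase_cons_head, Multiset.map_map]
    exact (Multiset.map_congr rfl (fun x hx => by
      have := σ.1.parts_pos hx
      simp only [Function.comp_apply, id_eq]
      omega)).trans (Multiset.map_id _)

lemma N_eq (n m : ℕ) (h1 : n ≤ 2 * m + 4) (h2 : m + 2 ≤ n) :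
    N (m : ℤ) n = Q (n - m - 1) :=
  Fintype.card_congr (rankEquiv n m h1 h2)


def gmap (t : ℕ) (ht : 102 ≤ t) (σ : {σ : Nat.Partition (t - 1) // 1 ∉ σ.parts}) :
    {σ : Nat.Partition t // 1 ∉ σ.parts} := by
  have hne : σ.1.parts ≠ 0 := by
    intro h0
    have hps := σ.1.parts_sum
    rw [h0] at hps; simp at hps; omega
  have hM : σ.1.parts.sup ∈ σ.1.parts := msup_mem hne
  have hkey : σ.1.parts.sup + (σ.1.parts.erase σ.1.parts.sup).sum = t - 1 := by
    have := congrArg Multiset.sum (Multiset.cons_erase hM)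
    rwa [Multiset.sum_cons, σ.1.parts_sum] at this
  refine ⟨⟨(σ.1.parts.sup + 1) ::ₘ σ.1.parts.erase σ.1.parts.sup, ?_, ?_⟩, ?_⟩
  · intro i hi
    rcases Multiset.mem_cons.1 hi with rfl | hi
    · omega
    · exact σ.1.parts_pos (Multiset.mem_of_mem_erase hi)
  · rw [Multiset.sum_cons]; omega
  · intro hmem
    rcases Multiset.mem_cons.1 hmem with h | h
    · have := σ.1.parts_pos hM; omega
    · exact σ.2 (Multiset.mem_of_mem_erase h)

lemma gmap_parts (t : ℕ) (ht : 102 ≤ t) (σ : {σ : Nat.Partition (t - 1) // 1 ∉ σ.parts}) :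
    (gmap t ht σ).1.parts = (σ.1.parts.sup + 1) ::ₘ σ.1.parts.erase σ.1.parts.sup := rfl

lemma gmap_sup (t : ℕ) (ht : 102 ≤ t) (σ : {σ : Nat.Partition (t - 1) // 1 ∉ σ.parts}) :
    (gmap t ht σ).1.parts.sup = σ.1.parts.sup + 1 := by
  rw [gmap_parts, Multiset.sup_cons, sup_eq_left, Multiset.sup_le]
  intro b hb
  have := Multiset.le_sup (Multiset.mem_of_mem_erase hb)
  omega

lemma gmap_count (t : ℕ) (ht : 102 ≤ t) (σ : {σ : Nat.Partition (t - 1) // 1 ∉ σ.parts}) :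
    Multiset.count ((gmap t ht σ).1.parts.sup) (gmap t ht σ).1.parts = 1 := by
  rw [gmap_sup, gmap_parts, Multiset.count_cons_self]
  have h0 : Multiset.count (σ.1.parts.sup + 1) (σ.1.parts.erase σ.1.parts.sup) = 0 := by
    rw [Multiset.count_eq_zero]
    intro hmem
    have := Multiset.le_sup (Multiset.mem_of_mem_erase hmem)
    omega
  omega

lemma gmap_inj (t : ℕ) (ht : 102 ≤ t) : Function.Injective (gmap t ht) := by
  have key : ∀ σ : {σ : Nat.Partition (t - 1) // 1 ∉ σ.parts},
      σ.1.parts = ((gmap t ht σ).1.parts.sup - 1) ::ₘ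
        (gmap t ht σ).1.parts.erase ((gmap t ht σ).1.parts.sup) := by
    intro σ
    have hne : σ.1.parts ≠ 0 := by
      intro h0
      have hps := σ.1.parts_sum
      rw [h0] at hps; simp at hps; omega
    have hM : σ.1.parts.sup ∈ σ.1.parts := msup_mem hne
    rw [gmap_sup, gmap_parts, Multiset.erase_cons_head, Nat.add_sub_cancel,
      Multiset.cons_erase hM]
  intro σ₁ σ₂ h
  apply Subtype.ext; apply Nat.Partition.ext
  rw [key σ₁, key σ₂, h]

lemma Q_lt (t : ℕ) (ht : 102 ≤ t) : Q (t - 1) < Q t := by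
  rcases Nat.even_or_odd t with he | ho
  · have h2 : t % 2 = 0 := Nat.even_iff.1 he
    refine Fintype.card_lt_of_injective_of_notMem (gmap t ht) (gmap_inj t ht)
      (b := ⟨⟨Multiset.replicate (t / 2) 2, ?_, ?_⟩, ?_⟩) ?_
    · intro i hi
      rw [Multiset.eq_of_mem_replicate hi]; norm_num
    · rw [Multiset.sum_replicate, smul_eq_mul]; omega
    · intro hmem
      have := Multiset.eq_of_mem_replicate hmem; omega
    · rintro ⟨σ, hσ⟩
      have hc := gmap_count t ht σ
      rw [hσ] at hc
      have hsup : (Multiset.replicate (t / 2) 2).sup = 2 := by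
        apply le_antisymm
        · rw [Multiset.sup_le]
          intro b hb
          rw [Multiset.eq_of_mem_replicate hb]
        · apply Multiset.le_sup
          apply Multiset.mem_replicate.2
          omega
      simp only [hsup] at hc
      rw [Multiset.count_replicate] at hc
      simp at hc
      omega
  · have h2 : t % 2 = 1 := Nat.odd_iff.1 ho
    refine Fintype.card_lt_of_injective_of_notMem (gmap t ht) (gmap_inj t ht)
      (b := ⟨⟨3 ::ₘ 3 ::ₘ 3 ::ₘ Multiset.replicate ((t - 9) / 2) 2, ?_, ?_⟩, ?_⟩) ?_
    · intro i hi
      simp only [Multiset.mem_cons] at hi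
      rcases hi with rfl | rfl | rfl | hi
      · norm_num
      · norm_num
      · norm_num
      · rw [Multiset.eq_of_mem_replicate hi]; norm_num
    · simp only [Multiset.sum_cons, Multiset.sum_replicate, smul_eq_mul]; omega
    · intro hmem
      simp only [Multiset.mem_cons] at hmem
      rcases hmem with h | h | h | h
      · omega
      · omega
      · omega
      · have := Multiset.eq_of_mem_replicate h; omega
    · rintro ⟨σ, hσ⟩
      have hc := gmap_count t ht σ
      rw [hσ] at hc
      have hsup : (3 ::ₘ 3 ::ₘ 3 ::ₘ Multiset.replicate ((t - 9) / 2) 2).sup = 3 := by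
        apply le_antisymm
        · rw [Multiset.sup_le]
          intro b hb
          simp only [Multiset.mem_cons] at hb
          rcases hb with rfl | rfl | rfl | hb
          · rfl
          · rfl
          · rfl
          · rw [Multiset.eq_of_mem_replicate hb]; norm_num
        · exact Multiset.le_sup (Multiset.mem_cons_self 3 _)
      simp only [hsup] at hc
      rw [Multiset.count_cons_self, Multiset.count_cons_self, Multiset.count_cons_self] at hc
      omega


/-- For `n ≥ 11523` and `n/2 - 2 ≤ m ≤ n - 103`, the rank difference equals the second
difference of the partition function at `ω₁ = n - m - 3`, and is strictly positive. -/
theorem rank_diff_middle_range (n m : ℕ) (hn : 11523 ≤ n)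
    (hm1 : (n : ℝ) / 2 - 2 ≤ (m : ℝ)) (hm2 : m ≤ n - 103) :
    (N (m : ℤ) n : ℤ) - (N ((m : ℤ) + 1) n : ℤ) =
        (p (n - m - 3) : ℤ) - 2 * (p (n - m - 2) : ℤ) + (p (n - m - 1) : ℤ) ∧
      0 < (p (n - m - 3) : ℤ) - 2 * (p (n - m - 2) : ℤ) + (p (n - m - 1) : ℤ) := by
  have hA : n ≤ 2 * m + 4 := by
    have hr : (n : ℝ) ≤ 2 * (m : ℝ) + 4 := by linarith
    exact_mod_cast hr
  have hB : m + 103 ≤ n := by omega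
  have hN1 : N (m : ℤ) n = Q (n - m - 1) := N_eq n m hA (by omega)
  have hN2 : N ((m : ℤ) + 1) n = Q (n - m - 2) := by
    rw [show ((m : ℤ) + 1) = ((m + 1 : ℕ) : ℤ) by push_cast; ring,
      N_eq n (m + 1) (by omega) (by omega)]
    congr 1
  have hp1 : p (n - m - 1) = p (n - m - 2) + Q (n - m - 1) := by
    have h := p_eq (n - m - 1) (by omega)
    rwa [show n - m - 1 - 1 = n - m - 2 by omega] at h
  have hp2 : p (n - m - 2) = p (n - m - 3) + Q (n - m - 2) := by
    have h := p_eq (n - m - 2) (by omega)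
    rwa [show n - m - 2 - 1 = n - m - 3 by omega] at h
  have hQ : Q (n - m - 2) < Q (n - m - 1) := by
    have h := Q_lt (n - m - 1) (by omega)
    rwa [show n - m - 1 - 1 = n - m - 2 by omega] at h
  have h1' : (p (n - m - 1) : ℤ) = (p (n - m - 2) : ℤ) + (Q (n - m - 1) : ℤ) := by
    exact_mod_cast hp1
  have h2' : (p (n - m - 2) : ℤ) = (p (n - m - 3) : ℤ) + (Q (n - m - 2) : ℤ) := by
    exact_mod_cast hp2
  have hQ' : (Q (n - m - 2) : ℤ) < (Q (n - m - 1) : ℤ) := by exact_mod_cast hQ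
  rw [hN1, hN2]
  constructor
  · linarith
  · linarith
end
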